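/- arXiv:1307.6610 — 2 statements merged into one kernel-verified Lean document; each statement's English description precedes it below -/
import Mathlib

section
/- Let ν = δ₁ (Dirac at 1) and let P = e^{-1} Σ_{k≥0} δ_k / k! be the Poisson(1) distribution. Define (A* g)(x) = e^{-1} Σ_{k≥0} g(x + k)/k! for g : ℝ → ℝ. Then the function g = 1_{{0}} − 2·1_{{1}} + 2·1_{{2}} is a nonzero element of L²₀(P) with (A* g)(1) = 0 and A* g = 0 ν-a.e.; in particular A* is not injective on L²₀(P). -/
open MeasureTheory

/-- The Poisson(1) distribution `P = e⁻¹ ∑ δ_k / k!`. -/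
noncomputable def poissonOne : Measure ℝ :=
  Measure.sum fun k : ℕ =>
    (ENNReal.ofReal (Real.exp (-1) / (Nat.factorial k))) • Measure.dirac (k : ℝ)

/-- The counterexample function `g = 1_{0} − 2·1_{1} + 2·1_{2}`. -/
noncomputable def gPoisson : ℝ → ℝ := fun x =>
  if x = 0 then 1 else if x = 1 then -2 else if x = 2 then 2 else 0

/-- The adjoint score operator `(A⋆ g)(x) = e⁻¹ ∑ g(x+k)/k!` of the Poisson model. -/
noncomputable def AstarPoisson (g : ℝ → ℝ) : ℝ → ℝ := fun x =>
  Real.exp (-1) * ∑' k : ℕ, g (x + k) / (Nat.factorial k)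

/-!
The Poisson(1) weights are `e⁻¹/k!`, so `∫ g dP = e⁻¹ (g 0 + g 1 + g 2 / 2) = e⁻¹ (1 - 2 + 1)` and
`(A⋆ g)(1) = e⁻¹ (g 1 + g 2) = e⁻¹ (-2 + 2)`: both vanish although `g 0 = 1` is charged by `P`.
-/

open scoped Nat

lemma hasSum_exp_neg_one_div_factorial : HasSum (fun k : ℕ ↦ Real.exp (-1) / k !) 1 := by
  simpa using ProbabilityTheory.hasSum_one_poissonMeasure 1

instance : IsProbabilityMeasure poissonOne :=
  hasSum_exp_neg_one_div_factorial.isProbabilityMeasure_sum_dirac fun _ ↦ by positivity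

lemma ae_poissonOne_iff {p : ℝ → Prop} : (∀ᵐ x ∂poissonOne, p x) ↔ ∀ k : ℕ, p k := by
  have hweight (k : ℕ) : ENNReal.ofReal (Real.exp (-1) / k !) ≠ 0 := by positivity
  simp only [poissonOne, Measure.ae_sum_iff, Measure.ae_ennreal_smul_measure_iff (hweight _),
    ae_dirac_eq, Filter.eventually_pure]

lemma integral_poissonOne (f : ℝ → ℝ) :
    ∫ x, f x ∂poissonOne = ∑' k : ℕ, Real.exp (-1) / k ! * f k := by
  rw [poissonOne, integral_sum_dirac fun _ ↦ ENNReal.ofReal_ne_top]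
  congr! with k
  exact ENNReal.toReal_ofReal (by positivity)

lemma measurable_gPoisson : Measurable gPoisson :=
  .ite (measurableSet_singleton 0) measurable_const <|
    .ite (measurableSet_singleton 1) measurable_const <|
      .ite (measurableSet_singleton 2) measurable_const measurable_const

lemma norm_gPoisson_le (x : ℝ) : ‖gPoisson x‖ ≤ 2 := by
  unfold gPoisson
  split_ifs <;> norm_num

lemma gPoisson_natCast_of_three_le {k : ℕ} (hk : 3 ≤ k) : gPoisson k = 0 := by
  have : (k : ℝ) ≠ 0 ∧ (k : ℝ) ≠ 1 ∧ (k : ℝ) ≠ 2 := by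
    refine ⟨?_, ?_, ?_⟩ <;> norm_cast <;> omega
  simp [gPoisson, this]

lemma memLp_gPoisson : MemLp gPoisson 2 poissonOne :=
  .of_bound measurable_gPoisson.aestronglyMeasurable 2 (.of_forall norm_gPoisson_le)

lemma integral_gPoisson : ∫ x, gPoisson x ∂poissonOne = 0 := by
  have hsupp (k : ℕ) (hk : k ∉ Finset.range 3) : Real.exp (-1) / k ! * gPoisson k = 0 := by
    rw [gPoisson_natCast_of_three_le (by simpa using hk), mul_zero]
  rw [integral_poissonOne, tsum_eq_sum hsupp]
  norm_num [Finset.sum_range_succ, gPoisson]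
  ring

lemma AstarPoisson_gPoisson_one : AstarPoisson gPoisson 1 = 0 := by
  have hsupp (k : ℕ) (hk : k ∉ Finset.range 2) : gPoisson (1 + k) / k ! = 0 := by
    rw [← Nat.cast_one, ← Nat.cast_add, gPoisson_natCast_of_three_le (by simp at hk; omega),
      zero_div]
  rw [AstarPoisson, tsum_eq_sum hsupp]
  norm_num [Finset.sum_range_succ, gPoisson]

/-- In the Poisson model with `ν = δ₁`, the adjoint score operator is not injective
on `L²₀(P)`: the nonzero centered function `gPoisson` satisfies `A⋆ g = 0` `ν`-a.e. -/
theorem poisson_adjoint_score_not_injective :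
    MemLp gPoisson 2 poissonOne ∧
    (∫ x, gPoisson x ∂poissonOne) = 0 ∧
    ¬ (∀ᵐ x ∂poissonOne, gPoisson x = 0) ∧
    AstarPoisson gPoisson 1 = 0 ∧
    (∀ᵐ x ∂(Measure.dirac (1 : ℝ)), AstarPoisson gPoisson x = 0) := by
  refine ⟨memLp_gPoisson, integral_gPoisson, ?_, AstarPoisson_gPoisson_one, ?_⟩
  · rw [ae_poissonOne_iff]
    intro h
    simpa [gPoisson] using h 0
  · rw [ae_dirac_eq]
    exact AstarPoisson_gPoisson_one
end

section
/- Let ν = δ₀ and μ = N(0,1), so P = ν ∗ μ = N(0,1). The function g(x) = x³ is a nonzero element of L²₀(P), and (A* g)(x) = E[(x + ε)³] = x³ + 3x (with ε ∼ N(0,1)) vanishes at x = 0, hence A* g = 0 ν-almost everywhere. Thus nonvanishing of the error characteristic function alone does not imply injectivity of the adjoint score operator on L²₀(P) as a map into L²(ν). -/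
open MeasureTheory ProbabilityTheory

/-! Under `N(0,1)` the odd moments vanish by symmetry and the second moment is the variance `1`,
so expanding the cube gives `E[(x + ε)³] = x³ + 3x`, which vanishes at the only atom of `δ₀`
although `x³` is a centred, square-integrable function that is not `P`-a.e. zero. -/

theorem integral_eq_zero_of_map_neg_eq_of_odd {E : Type*} [NormedAddCommGroup E]
    [NormedSpace ℝ E] {μ : Measure ℝ} (hμ : μ.map Neg.neg = μ) {f : ℝ → E}
    (hf : ∀ x, f (-x) = -f x) : ∫ x, f x ∂μ = 0 := by
  have h : ∫ x, f x ∂μ = -∫ x, f x ∂μ :=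
    calc ∫ x, f x ∂μ = ∫ x, f x ∂μ.map (MeasurableEquiv.neg ℝ) := by
          rw [show ⇑(MeasurableEquiv.neg ℝ) = Neg.neg from rfl, hμ]
      _ = ∫ x, f (-x) ∂μ := integral_map_equiv _ _
      _ = -∫ x, f x ∂μ := by simp only [hf, integral_neg]
  rwa [eq_neg_iff_add_eq_zero, ← two_smul ℝ, smul_eq_zero, or_iff_right two_ne_zero] at h

theorem integral_add_pow_three {μ : Measure ℝ} [IsProbabilityMeasure μ]
    (h₁ : Integrable (fun y => y) μ) (h₂ : Integrable (fun y => y ^ 2) μ)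
    (h₃ : Integrable (fun y => y ^ 3) μ) (x : ℝ) :
    ∫ y, (x + y) ^ 3 ∂μ
      = x ^ 3 + 3 * x ^ 2 * ∫ y, y ∂μ + 3 * x * ∫ y, y ^ 2 ∂μ + ∫ y, y ^ 3 ∂μ := by
  have h₁' := h₁.const_mul (3 * x ^ 2)
  have h₂' := h₂.const_mul (3 * x)
  calc ∫ y, (x + y) ^ 3 ∂μ
      = ∫ y, x ^ 3 + 3 * x ^ 2 * y + 3 * x * y ^ 2 + y ^ 3 ∂μ := by congr with y; ring
    _ = _ := by
      rw [integral_add (((integrable_const _).fun_add h₁').fun_add h₂') h₃,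
        integral_add ((integrable_const _).fun_add h₁') h₂',
        integral_add (integrable_const _) h₁', integral_const, integral_const_mul,
        integral_const_mul]
      simp

theorem integrable_pow_gaussianReal (m : ℝ) (v : NNReal) (k : ℕ) :
    Integrable (fun x : ℝ => x ^ k) (gaussianReal m v) :=
  (integrable_norm_iff (by fun_prop)).mp <| by
    simpa only [norm_pow, id] using (memLp_id_gaussianReal (μ := m) (v := v) k).integrable_norm_pow'

theorem integral_pow_three_gaussianReal_zero (v : NNReal) :
    ∫ x, x ^ 3 ∂gaussianReal 0 v = 0 :=
  integral_eq_zero_of_map_neg_eq_of_odd (by simpa using gaussianReal_map_neg (μ := 0) (v := v))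
    fun x => Odd.neg_pow (by decide) x

theorem integral_sq_gaussianReal_zero (v : NNReal) :
    ∫ x, x ^ 2 ∂gaussianReal 0 v = v := by
  rw [← variance_fun_id_gaussianReal (μ := 0), variance_eq_integral (by fun_prop),
    integral_id_gaussianReal]
  simp

theorem integral_add_pow_three_gaussianReal_zero (v : NNReal) (x : ℝ) :
    ∫ y, (x + y) ^ 3 ∂gaussianReal 0 v = x ^ 3 + 3 * v * x := by
  rw [integral_add_pow_three (by simpa using integrable_pow_gaussianReal 0 v 1)
    (integrable_pow_gaussianReal 0 v 2) (integrable_pow_gaussianReal 0 v 3),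
    integral_id_gaussianReal, integral_sq_gaussianReal_zero, integral_pow_three_gaussianReal_zero]
  ring

/-- With `ν = δ₀` and `μ = N(0,1)` (so `P = ν ∗ μ = N(0,1)`), the function
`g(x) = x³` is a nonzero element of `L²₀(P)`, yet its image under the adjoint
score operator `(A⋆ g)(x) = ∫ (x+y)³ dμ(y) = x³ + 3x` vanishes `ν`-a.e.
Hence nonvanishing of the Gaussian characteristic function does not imply
injectivity of `A⋆` on `L²₀(P)`. -/
theorem gaussian_adjoint_score_not_injective :
    MemLp (fun x : ℝ => x ^ 3) 2 (gaussianReal 0 1) ∧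
    (∫ x, x ^ 3 ∂(gaussianReal 0 1)) = 0 ∧
    ¬ (∀ᵐ x ∂(gaussianReal 0 1), x ^ 3 = (0 : ℝ)) ∧
    (∀ x : ℝ, ∫ y, (x + y) ^ 3 ∂(gaussianReal 0 1) = x ^ 3 + 3 * x) ∧
    (∫ y, (0 + y) ^ 3 ∂(gaussianReal 0 1)) = 0 ∧
    (∀ᵐ x ∂(Measure.dirac (0 : ℝ)), ∫ y, (x + y) ^ 3 ∂(gaussianReal 0 1) = 0) := by
  have hA : ∀ x : ℝ, ∫ y, (x + y) ^ 3 ∂gaussianReal 0 1 = x ^ 3 + 3 * x := fun x => by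
    simpa using integral_add_pow_three_gaussianReal_zero 1 x
  have hA₀ : ∫ y, (0 + y) ^ 3 ∂gaussianReal 0 1 = 0 := by simpa using hA 0
  refine ⟨?_, integral_pow_three_gaussianReal_zero 1, ?_, hA, hA₀, ?_⟩
  · rw [memLp_two_iff_integrable_sq (by fun_prop)]
    simpa only [← pow_mul] using integrable_pow_gaussianReal 0 1 6
  · -- otherwise the second moment `∫ x² = 1` would vanish
    intro h
    have hsq : ∫ x, x ^ 2 ∂gaussianReal 0 1 = 0 := by
      rw [integral_congr_ae (g := 0) (h.mono fun x hx => by simpa using hx)]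
      simp
    simp [integral_sq_gaussianReal_zero] at hsq
  · rw [ae_dirac_eq, Filter.eventually_pure]
    exact hA₀
end
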